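/- arXiv:1002.3256 — 2 statements merged into one kernel-verified Lean document; each statement's English description precedes it below -/
import Mathlib

section
/- For all 0 ≤ t ≤ θ and every integrable F_θ-measurable random variable φ_θ, one has P(τ > t, S_t = 0) = 0 and, P-almost surely, E_P[φ_θ 1_{τ > θ} | G_t] = 1_{τ > t} · E_P[φ_θ S_θ | F_t] / S_t, where the right-hand side is taken to be 0 on the event {τ ≤ t}. (First formula of Proposition 4.1: the key lemma of progressive enlargement of filtration.) -/
open MeasureTheory ProbabilityTheory Set
open scoped NNReal Classical

noncomputable section

/-- Running infimum `X*_t = inf_{s ≤ t} X_s` of the process `X` over the time interval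
`[0, t]`. -/
def runInf {Ω : Type*} (X : ℝ≥0 → Ω → ℝ) (t : ℝ≥0) (ω : Ω) : ℝ :=
  ⨅ s : Set.Icc (0 : ℝ≥0) t, X s.1 ω

/-- The σ-algebra `σ({τ ≤ s} : s ≤ t)` generated by the default observations up to time
`t`. -/
def defaultSigma {Ω : Type*} (τ : Ω → ℝ≥0) (t : ℝ≥0) : MeasurableSpace Ω :=
  MeasurableSpace.generateFrom {A | ∃ s ≤ t, A = {ω | τ ω ≤ s}}

/-- The Azéma supermartingale `S_t = P(τ > t | F_t)` of `τ`. -/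
def azema {Ω : Type*} [m0 : MeasurableSpace Ω] (P : Measure Ω) (F : Filtration ℝ≥0 m0)
    (τ : Ω → ℝ≥0) (t : ℝ≥0) : Ω → ℝ :=
  P[fun ω => if t < τ ω then (1 : ℝ) else 0|F t]

/-!
Write `T = {τ > t}` and `S = P[1_T | F_t]`. On `T`, every set of `G_t = F_t ∨ σ(τ ∧ t)` coincides
with a set of `F_t`, so a `G_t`-measurable candidate for `E[Z 1_T | G_t]` may be sought of the
form `1_T h` with `h` `F_t`-measurable. Since the measures `P(· ∩ T)` and `S · P` agree on `F_t`,
testing against `F_t`-sets forces `S h = E[Z 1_T | F_t]`. The same identity shows that `T` is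
null on `{S = 0}`, which is the first claim and makes `h = E[Z 1_T | F_t] / S` a valid choice.
Finally, for `Z = φ 1_{τ > θ}` the tower property through `F_θ` replaces `E[Z | F_t]` by
`E[φ S_θ | F_t]`.
-/

theorem measurable_iInf_of_continuous {ι δ α : Type*} [TopologicalSpace ι]
    [TopologicalSpace.SeparableSpace ι] [MeasurableSpace δ] [ConditionallyCompleteLinearOrder α]
    [TopologicalSpace α] [OrderTopology α] [SecondCountableTopology α] [MeasurableSpace α]
    [BorelSpace α] {f : ι → δ → α} (hmeas : ∀ i, Measurable (f i))
    (hcont : ∀ x, Continuous fun i => f i x) :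
    Measurable fun x => ⨅ i, f i x := by
  obtain ⟨D, hD_count, hD_dense⟩ := TopologicalSpace.exists_countable_dense ι
  have : Countable D := hD_count.to_subtype
  simp_rw [← hD_dense.ciInf' (hcont _)]
  exact Measurable.iInf fun i => hmeas i

theorem measurable_runInf {Ω : Type*} [MeasurableSpace Ω] {X : ℝ≥0 → Ω → ℝ}
    (hmeas : ∀ s, Measurable (X s)) (hcont : ∀ ω, Continuous fun s => X s ω) (t : ℝ≥0) :
    Measurable (runInf X t) :=
  measurable_iInf_of_continuous (fun s => hmeas s.1) fun ω =>
    (hcont ω).comp continuous_subtype_val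

section KeyLemma

variable {Ω : Type*} {m m0 : MeasurableSpace Ω} {P : Measure[m0] Ω} {T : Set Ω}

theorem condExp_indicator_one_nonneg : 0 ≤ᵐ[P] P[T.indicator (1 : Ω → ℝ)|m] :=
  condExp_nonneg (ae_of_all _ (indicator_nonneg fun _ _ => zero_le_one))

variable [IsFiniteMeasure P]

theorem measure_inter_condExp_indicator_eq_zero (hm : m ≤ m0) (hT : MeasurableSet T) :
    P (T ∩ {ω | P[T.indicator (1 : Ω → ℝ)|m] ω = 0}) = 0 := by
  set N := {ω | P[T.indicator (1 : Ω → ℝ)|m] ω = 0}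
  have hN : MeasurableSet[m] N :=
    stronglyMeasurable_condExp.measurable (measurableSet_singleton 0)
  have h : P.real (N ∩ T) = 0 := calc
    P.real (N ∩ T) = ∫ ω in N, T.indicator 1 ω ∂P := by
      rw [setIntegral_indicator hT]; simp
    _ = ∫ ω in N, P[T.indicator (1 : Ω → ℝ)|m] ω ∂P :=
      (setIntegral_condExp hm ((integrable_const 1).indicator hT) hN).symm
    _ = 0 := setIntegral_eq_zero_of_forall_eq_zero fun _ hω => hω
  rwa [inter_comm, ← measureReal_eq_zero_iff (measure_ne_top _ _)]

theorem trim_restrict_eq_trim_withDensity_condExp (hm : m ≤ m0) (hT : MeasurableSet T) :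
    (P.restrict T).trim hm =
      (P.withDensity fun ω => (P[T.indicator (1 : Ω → ℝ)|m] ω).toNNReal).trim hm := by
  refine @Measure.ext _ m _ _ fun A hA => ?_
  rw [trim_measurableSet_eq hm hA, trim_measurableSet_eq hm hA, Measure.restrict_apply (hm A hA),
    withDensity_apply _ (hm A hA)]
  change _ = ∫⁻ ω in A, ENNReal.ofReal (P[T.indicator (1 : Ω → ℝ)|m] ω) ∂P
  rw [← ofReal_integral_eq_lintegral_ofReal
      integrable_condExp.integrableOn (ae_restrict_of_ae condExp_indicator_one_nonneg),
    setIntegral_condExp hm ((integrable_const 1).indicator hT) hA, setIntegral_indicator hT]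
  simp

variable {E : Type*} [NormedAddCommGroup E] [NormedSpace ℝ E]

theorem integrableOn_iff_integrable_condExp_smul (hm : m ≤ m0) (hT : MeasurableSet T)
    {g : Ω → E} (hg : StronglyMeasurable[m] g) :
    IntegrableOn g T P ↔
      Integrable (fun ω => (P[T.indicator (1 : Ω → ℝ)|m] ω).toNNReal • g ω) P := by
  have hS : Measurable fun ω => (P[T.indicator (1 : Ω → ℝ)|m] ω).toNNReal :=
    (stronglyMeasurable_condExp.measurable.mono hm le_rfl).real_toNNReal
  have h_trim := trim_restrict_eq_trim_withDensity_condExp (P := P) hm hT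
  rw [← integrable_withDensity_iff_integrable_smul hS]
  exact ⟨fun h => integrable_of_integrable_trim hm (h_trim ▸ h.trim hm hg),
    fun h => integrable_of_integrable_trim hm (h_trim ▸ h.trim hm hg)⟩

theorem setIntegral_eq_integral_condExp_smul [CompleteSpace E] (hm : m ≤ m0)
    (hT : MeasurableSet T) {g : Ω → E} (hg : StronglyMeasurable[m] g) :
    ∫ ω in T, g ω ∂P =
      ∫ ω, (P[T.indicator (1 : Ω → ℝ)|m] ω).toNNReal • g ω ∂P := by
  have hS : Measurable fun ω => (P[T.indicator (1 : Ω → ℝ)|m] ω).toNNReal :=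
    (stronglyMeasurable_condExp.measurable.mono hm le_rfl).real_toNNReal
  rw [integral_trim hm hg, trim_restrict_eq_trim_withDensity_condExp hm hT,
    ← integral_trim hm hg]
  exact integral_withDensity_eq_integral_smul hS g

theorem ae_condExp_indicator_eq_zero_of_condExp_indicator_one_eq_zero (hm : m ≤ m0)
    (hT : MeasurableSet T) (Z : Ω → ℝ) :
    ∀ᵐ ω ∂P, P[T.indicator (1 : Ω → ℝ)|m] ω = 0 → P[T.indicator Z|m] ω = 0 := by
  set N := {ω | P[T.indicator (1 : Ω → ℝ)|m] ω = 0}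
  have hN : MeasurableSet[m] N :=
    stronglyMeasurable_condExp.measurable (measurableSet_singleton 0)
  have hZN : N.indicator (T.indicator Z) =ᵐ[P] 0 := by
    rw [indicator_indicator, inter_comm]
    exact indicator_meas_zero (measure_inter_condExp_indicator_eq_zero hm hT)
  have hMN : N.indicator (P[T.indicator Z|m]) =ᵐ[P] 0 := by
    by_cases hZ : Integrable (T.indicator Z) P
    · calc N.indicator (P[T.indicator Z|m]) =ᵐ[P] P[N.indicator (T.indicator Z)|m] :=
            (condExp_indicator hZ hN).symm
        _ =ᵐ[P] P[0|m] := condExp_congr_ae hZN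
        _ = 0 := condExp_zero
    · simp [condExp_of_not_integrable hZ]
  filter_upwards [hMN] with ω hω hS
  rwa [indicator_of_mem (show ω ∈ N from hS)] at hω

theorem condExp_indicator_eq_indicator_div_of_inter_eq {G : MeasurableSpace Ω} (hmG : m ≤ G)
    (hG : G ≤ m0) (hT : MeasurableSet[G] T)
    (htrace : ∀ A, MeasurableSet[G] A → ∃ B, MeasurableSet[m] B ∧ A ∩ T = B ∩ T)
    {Z : Ω → ℝ} (hZ : Integrable Z P) :
    P[T.indicator Z|G] =ᵐ[P]
      T.indicator fun ω => P[T.indicator Z|m] ω / P[T.indicator (1 : Ω → ℝ)|m] ω := by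
  have hm := hmG.trans hG
  have hT0 : MeasurableSet[m0] T := hG _ hT
  set S := P[T.indicator (1 : Ω → ℝ)|m]
  set M := P[T.indicator Z|m]
  set h := fun ω => M ω / S ω
  have hh : StronglyMeasurable[m] h := (stronglyMeasurable_condExp.measurable.div
    stronglyMeasurable_condExp.measurable).stronglyMeasurable
  -- `M` vanishes where `S` does, so `S • (M / S) = M` despite the junk value `M / 0 = 0`.
  have hSh : (fun ω => (S ω).toNNReal • h ω) =ᵐ[P] M := by
    filter_upwards [condExp_indicator_one_nonneg (P := P) (m := m) (T := T),
      ae_condExp_indicator_eq_zero_of_condExp_indicator_one_eq_zero hm hT0 Z]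
      with ω hS_nonneg hM_zero
    rcases hS_nonneg.eq_or_lt with hS | hS
    · have hS0 : S ω = 0 := hS.symm
      have hM0 : M ω = 0 := hM_zero hS0
      simp [h, hS0, hM0]
    · rw [NNReal.smul_def, Real.coe_toNNReal _ hS.le, smul_eq_mul, mul_div_cancel₀ _ hS.ne']
  have hint : Integrable (T.indicator h) P :=
    (integrable_indicator_iff hT0).mpr ((integrableOn_iff_integrable_condExp_smul hm hT0 hh).mpr
      (integrable_condExp.congr hSh.symm))
  refine (ae_eq_condExp_of_forall_setIntegral_eq hG (hZ.indicator hT0)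
    (fun _ _ _ => hint.integrableOn) (fun A hA _ => ?_)
    ((hh.mono hmG).indicator hT).aestronglyMeasurable).symm
  obtain ⟨B, hB, hAB⟩ := htrace A hA
  calc ∫ ω in A, T.indicator h ω ∂P = ∫ ω in T, B.indicator h ω ∂P := by
        rw [setIntegral_indicator hT0, setIntegral_indicator (hm B hB), hAB, inter_comm]
    _ = ∫ ω, B.indicator (fun ω => (S ω).toNNReal • h ω) ω ∂P := by
        rw [setIntegral_eq_integral_condExp_smul hm hT0 (hh.indicator hB), indicator_smul]
    _ = ∫ ω in B, M ω ∂P := by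
        rw [integral_indicator (hm B hB)]
        exact integral_congr_ae (ae_restrict_of_ae hSh)
    _ = ∫ ω in B, T.indicator Z ω ∂P := setIntegral_condExp hm (hZ.indicator hT0) hB
    _ = ∫ ω in A, T.indicator Z ω ∂P := by
        rw [setIntegral_indicator hT0, setIntegral_indicator hT0, hAB]

theorem condExp_indicator_eq_mul_condExp_indicator_one (hT : MeasurableSet T)
    {φ : Ω → ℝ} (hφm : StronglyMeasurable[m] φ) (hφ : Integrable φ P) :
    P[T.indicator φ|m] =ᵐ[P] φ * P[T.indicator (1 : Ω → ℝ)|m] := by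
  have hφT : T.indicator φ = φ * T.indicator 1 := by
    ext ω; by_cases hω : ω ∈ T <;> simp [hω]
  rw [hφT]
  exact condExp_mul_of_stronglyMeasurable_left hφm (hφT ▸ hφ.indicator hT)
    ((integrable_const 1).indicator hT)

end KeyLemma

section DefaultSigma

variable {Ω : Type*} {τ : Ω → ℝ≥0}

theorem measurableSet_defaultSigma_lt (t : ℝ≥0) :
    MeasurableSet[defaultSigma τ t] {ω | t < τ ω} := by
  have h : MeasurableSet[defaultSigma τ t] {ω | τ ω ≤ t} :=
    MeasurableSpace.measurableSet_generateFrom ⟨t, le_rfl, rfl⟩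
  simpa only [compl_ofPred, not_le] using h.compl

theorem defaultSigma_le [m0 : MeasurableSpace Ω] (hτ : Measurable τ) (t : ℝ≥0) :
    defaultSigma τ t ≤ m0 :=
  MeasurableSpace.generateFrom_le fun _ ⟨_, _, hA⟩ =>
    hA ▸ measurableSet_le hτ measurable_const

theorem exists_measurableSet_inter_eq_of_measurableSet_sup_defaultSigma
    (m : MeasurableSpace Ω) {t : ℝ≥0} {A : Set Ω}
    (hA : MeasurableSet[m ⊔ defaultSigma τ t] A) :
    ∃ B, MeasurableSet[m] B ∧ A ∩ {ω | t < τ ω} = B ∩ {ω | t < τ ω} := by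
  let val : {ω | t < τ ω} → Ω := Subtype.val
  -- `(m.comap val).map val` is the σ-algebra of sets that agree on `{t < τ}` with a set of `m`.
  have hle : m ⊔ defaultSigma τ t ≤ (m.comap val).map val := by
    refine sup_le MeasurableSpace.le_map_comap (MeasurableSpace.generateFrom_le ?_)
    rintro _ ⟨s, hs, rfl⟩
    have h_empty : val ⁻¹' {ω | τ ω ≤ s} = ∅ :=
      eq_empty_of_forall_notMem fun ω hω => (hω.trans hs).not_gt ω.2
    show MeasurableSet[m.comap val] (val ⁻¹' _)
    rw [h_empty]
    exact MeasurableSet.empty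
  obtain ⟨B, hB, hBA⟩ := hle A hA
  refine ⟨B, hB, ?_⟩
  rw [inter_comm, inter_comm B, ← Subtype.preimage_coe_eq_preimage_coe_iff]
  exact hBA.symm

theorem condExp_sup_defaultSigma_indicator {m m0 : MeasurableSpace Ω} {P : Measure[m0] Ω}
    [IsFiniteMeasure P] (hm : m ≤ m0) (hτ : Measurable τ) (t : ℝ≥0) {Z : Ω → ℝ}
    (hZ : Integrable Z P) :
    P[{ω | t < τ ω}.indicator Z|m ⊔ defaultSigma τ t] =ᵐ[P]
      {ω | t < τ ω}.indicator fun ω => P[{ω | t < τ ω}.indicator Z|m] ω /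
        P[{ω | t < τ ω}.indicator (1 : Ω → ℝ)|m] ω :=
  condExp_indicator_eq_indicator_div_of_inter_eq le_sup_left (sup_le hm (defaultSigma_le hτ t))
    (le_sup_right (a := m) _ (measurableSet_defaultSigma_lt t))
    (fun _ hA => exists_measurableSet_inter_eq_of_measurableSet_sup_defaultSigma m hA) hZ

theorem azema_eq_condExp_indicator [m0 : MeasurableSpace Ω] (P : Measure Ω)
    (F : Filtration ℝ≥0 m0) (τ : Ω → ℝ≥0) (t : ℝ≥0) :
    azema P F τ t = P[{ω | t < τ ω}.indicator 1|F t] := by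
  unfold azema
  congr 1

end DefaultSigma

theorem progressive_information_key_lemma_general
    {Ω : Type*} [m0 : MeasurableSpace Ω] {P : Measure Ω} [IsProbabilityMeasure P]
    (F : Filtration ℝ≥0 m0)
    (X : ℝ≥0 → Ω → ℝ) (hX_adapted : Adapted F X)
    (hX_cont : ∀ ω, Continuous fun s => X s ω)
    (L : Ω → ℝ) (hL : Measurable L)
    (τ : Ω → ℝ≥0)
    (hτ : ∀ (θ : ℝ≥0) (ω : Ω), θ < τ ω ↔ L ω < runInf X θ ω)
    (t θ : ℝ≥0) (htθ : t ≤ θ)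
    (φ : Ω → ℝ) (hφ_meas : Measurable[F θ] φ) (hφ_int : Integrable φ P) :
    P {ω | t < τ ω ∧ azema P F τ t ω = 0} = 0 ∧
    (P[fun ω => φ ω * (if θ < τ ω then 1 else 0)|F t ⊔ defaultSigma τ t]) =ᵐ[P]
      fun ω => if t < τ ω then
        (P[fun ω' => φ ω' * azema P F τ θ ω'|F t]) ω / azema P F τ t ω
      else 0 := by
  have hτ_meas : Measurable τ := measurable_of_Ioi fun s => by
    have hX : ∀ s, Measurable (X s) := fun s => (hX_adapted s).mono (F.le s) le_rfl
    simpa only [preimage, mem_Ioi, hτ] using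
      measurableSet_lt hL (measurable_runInf hX hX_cont s)
  have hT : MeasurableSet {ω | t < τ ω} := measurableSet_lt measurable_const hτ_meas
  have hTθ : MeasurableSet {ω | θ < τ ω} := measurableSet_lt measurable_const hτ_meas
  simp only [azema_eq_condExp_indicator]
  refine ⟨measure_inter_condExp_indicator_eq_zero (F.le t) hT, ?_⟩
  set Z := {ω | θ < τ ω}.indicator φ
  have hZ : (fun ω => φ ω * if θ < τ ω then 1 else 0) = Z := by
    ext ω; by_cases h : θ < τ ω <;> simp [Z, h]
  have hTZ : {ω | t < τ ω}.indicator Z = Z := by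
    have hTθT : {ω | θ < τ ω} ⊆ {ω | t < τ ω} := fun _ hω => htθ.trans_lt hω
    rw [indicator_indicator, inter_eq_right.mpr hTθT]
  have hG := condExp_sup_defaultSigma_indicator (F.le t) hτ_meas t (hφ_int.indicator hTθ)
  rw [hTZ] at hG
  have hM : P[Z|F t] =ᵐ[P] P[φ * P[{ω | θ < τ ω}.indicator 1|F θ]|F t] :=
    (condExp_condExp_of_le (F.mono htθ) (F.le θ)).symm.trans (condExp_congr_ae
      (condExp_indicator_eq_mul_condExp_indicator_one hTθ hφ_meas.stronglyMeasurable hφ_int))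
  rw [hZ]
  filter_upwards [hG, hM] with ω hGω hMω
  rw [hGω, indicator_apply, hMω]
  rfl

/-- **Proposition 4.1, first formula.** For all `0 ≤ t ≤ θ` and every integrable
`F_θ`-measurable `φ_θ`, one has `P(τ > t, S_t = 0) = 0` and, `P`-a.s.,
`E_P[φ_θ 1_{τ > θ} | G_t] = 1_{τ > t} E_P[φ_θ S_θ | F_t] / S_t` (the right-hand side being
`0` on `{τ ≤ t}`). -/
theorem progressive_information_key_lemma
    {Ω : Type*} [m0 : MeasurableSpace Ω] {P : Measure Ω} [IsProbabilityMeasure P]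
    (F : Filtration ℝ≥0 m0)
    (X : ℝ≥0 → Ω → ℝ) (hX_adapted : Adapted F X)
    (hX_cont : ∀ ω, Continuous fun s => X s ω)
    (L : Ω → ℝ) (hL : Measurable L)
    (hX0 : ∀ᵐ ω ∂P, L ω < X 0 ω)
    (τ : Ω → ℝ≥0)
    (hτ : ∀ (θ : ℝ≥0) (ω : Ω), θ < τ ω ↔ L ω < runInf X θ ω)
    (t θ : ℝ≥0) (htθ : t ≤ θ)
    (φ : Ω → ℝ) (hφ_meas : Measurable[F θ] φ) (hφ_int : Integrable φ P) :
    P {ω | t < τ ω ∧ azema P F τ t ω = 0} = 0 ∧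
    (P[fun ω => φ ω * (if θ < τ ω then 1 else 0)|F t ⊔ defaultSigma τ t]) =ᵐ[P]
      fun ω => if t < τ ω then
        (P[fun ω' => φ ω' * azema P F τ θ ω'|F t]) ω / azema P F τ t ω
      else 0 :=
  progressive_information_key_lemma_general (m0 := m0) F X hX_adapted hX_cont L hL τ hτ t θ htθ φ
    hφ_meas hφ_int
end
end

section
/- Under Jacod's density hypothesis, suppose ε_t is a real random variable independent of F_∞ ∨ σ(L) whose law has density q_t with respect to Lebesgue measure, and set L_t := L + ε_t. Then for every Borel set U ∈ B(ℝ²) and every t ≥ 0, one has P-almost surely P((L, L_t) ∈ U | F_t) = ∫_ℝ ∫_ℝ 1_U(l, x) q_t(x − l) p_t(l) dx P^L(dl). (Conditional joint law of (L, L_t) given F_t, established in the proof of Proposition 5.1; here p_t(l) P^L(dl) is the regular conditional law P^L_t of L given F_t.) -/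
open MeasureTheory ProbabilityTheory Set
open scoped NNReal Classical

noncomputable section

/-- **Conditional joint law of `(L, L_t)` given `F_t`** (proof of Proposition 5.1). Under
Jacod's density hypothesis, if `ε_t` is independent of `F_∞ ∨ σ(L)` with Lebesgue density
`q_t`, and `L_t := L + ε_t`, then for every Borel `U ⊆ ℝ²` and `t ≥ 0`, `P`-a.s.,
`P((L, L_t) ∈ U | F_t) = ∫ ∫ 1_U(l, x) q_t(x − l) p_t(l) dx P^L(dl)`. -/
theorem conditional_joint_law_noisy_barrier
    {Ω : Type*} [m0 : MeasurableSpace Ω] {P : Measure Ω} [IsProbabilityMeasure P]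
    (F : Filtration ℝ≥0 m0)
    (L : Ω → ℝ) (hL : Measurable L)
    -- Jacod's density hypothesis
    (p : ℝ≥0 → ℝ → Ω → ℝ)
    (hp_nonneg : ∀ t x ω, 0 ≤ p t x ω)
    (hp_meas : ∀ t, Measurable[(F t).prod inferInstance] fun q : Ω × ℝ => p t q.2 q.1)
    (hp_pos : ∀ t, ∀ᵐ ω ∂P, 0 < p t (L ω) ω)
    (hp_density : ∀ (t : ℝ≥0) (f : ℝ → ℝ), Measurable f → (∃ C, ∀ x, |f x| ≤ C) →
      (P[fun ω => f (L ω)|F t]) =ᵐ[P] fun ω => ∫ x, f x * p t x ω ∂(P.map L))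
    -- the noise at time `t`: independent of `F_∞ ∨ σ(L)`, with Lebesgue density `q`
    (ε : Ω → ℝ) (hε_meas : Measurable ε)
    (hε_indep : Indep (MeasurableSpace.comap ε inferInstance)
      ((⨆ s, F s) ⊔ MeasurableSpace.comap L inferInstance) P)
    (q : ℝ → ℝ) (hq_meas : Measurable q) (hq_nonneg : ∀ x, 0 ≤ q x)
    (hq_density : P.map ε = volume.withDensity fun x => ENNReal.ofReal (q x))
    (t : ℝ≥0)
    (U : Set (ℝ × ℝ)) (hU : MeasurableSet U) :
    (P[fun ω => if (L ω, L ω + ε ω) ∈ U then (1 : ℝ) else 0|F t]) =ᵐ[P]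
      fun ω => ∫ l, (∫ x, (if (l, x) ∈ U then (1 : ℝ) else 0) * q (x - l))
        * p t l ω ∂(P.map L) := by
  classical
  set f : ℝ → ℝ := fun l => ∫ x, (if (l, x) ∈ U then (1 : ℝ) else 0) * q (x - l) with hf_def
  haveI : IsProbabilityMeasure (P.map ε) := Measure.isProbabilityMeasure_map hε_meas.aemeasurable
  -- `q` is a probability density
  have h_lint_q : ∫⁻ x, ENNReal.ofReal (q x) = 1 := by
    have h := (measure_univ : P.map ε Set.univ = 1)
    rw [hq_density, withDensity_apply _ MeasurableSet.univ, setLIntegral_univ] at h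
    exact h
  have hq_int : Integrable q := by
    refine ⟨hq_meas.aestronglyMeasurable, ?_⟩
    rw [hasFiniteIntegral_iff_norm]
    have h : (fun x : ℝ => ENNReal.ofReal ‖q x‖) = fun x => ENNReal.ofReal (q x) := by
      funext x; rw [Real.norm_eq_abs, abs_of_nonneg (hq_nonneg x)]
    rw [h, h_lint_q]
    exact ENNReal.one_lt_top
  have hq_integral_one : ∫ x, q x = 1 := by
    rw [integral_eq_lintegral_of_nonneg_ae (Filter.Eventually.of_forall hq_nonneg)
      hq_meas.aestronglyMeasurable, h_lint_q, ENNReal.toReal_one]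
  -- measurability of the integrand on the product
  have hF_meas : Measurable fun z : ℝ × ℝ =>
      (if (z.1, z.2) ∈ U then (1 : ℝ) else 0) * q (z.2 - z.1) := by
    have h1 : Measurable fun z : ℝ × ℝ => (if (z.1, z.2) ∈ U then (1 : ℝ) else 0) := by
      have h2 : MeasurableSet {z : ℝ × ℝ | (z.1, z.2) ∈ U} := by simpa using hU
      exact Measurable.ite h2 measurable_const measurable_const
    exact h1.mul (hq_meas.comp (measurable_snd.sub measurable_fst))
  have hf_meas : Measurable f := by
    have h := (hF_meas.stronglyMeasurable).integral_prod_right' (ν := (volume : Measure ℝ))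
    exact h.measurable
  -- pointwise integrability and bounds for `f`
  have hfl_int : ∀ l : ℝ,
      Integrable fun x => (if (l, x) ∈ U then (1 : ℝ) else 0) * q (x - l) := by
    intro l
    refine (hq_int.comp_sub_right l).mono' ?_ ?_
    · exact (hF_meas.comp (measurable_const.prodMk measurable_id)).aestronglyMeasurable
    · refine Filter.Eventually.of_forall fun x => ?_
      by_cases h : (l, x) ∈ U <;> simp [h, abs_of_nonneg (hq_nonneg _), hq_nonneg]
  have hf_nonneg : ∀ l, 0 ≤ f l := fun l => integral_nonneg fun x =>
    mul_nonneg (by by_cases h : (l, x) ∈ U <;> simp [h]) (hq_nonneg _)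
  have hf_le_one : ∀ l, f l ≤ 1 := by
    intro l
    have h1 : f l ≤ ∫ x, q (x - l) := by
      refine integral_mono (hfl_int l) (hq_int.comp_sub_right l) fun x => ?_
      by_cases h : (l, x) ∈ U <;> simp [h, hq_nonneg]
    have h2 : ∫ x, q (x - l) = 1 := by rw [integral_sub_right_eq_self q l, hq_integral_one]
    linarith
  have hf_bdd : ∃ C, ∀ x, |f x| ≤ C :=
    ⟨1, fun x => abs_le.2 ⟨by linarith [hf_nonneg x], hf_le_one x⟩⟩
  -- inner integral identity
  have h_inner : ∀ l : ℝ,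
      ∫ x, (if (l, l + x) ∈ U then (1 : ℝ) else 0) ∂(P.map ε) = f l := by
    intro l
    rw [hq_density]
    have hd : (fun x : ℝ => ENNReal.ofReal (q x)) = fun x => (Real.toNNReal (q x) : ENNReal) := rfl
    rw [hd, integral_withDensity_eq_integral_smul (show Measurable fun x : ℝ => (q x).toNNReal from measurable_real_toNNReal.comp hq_meas)]
    have h : (fun x : ℝ => (q x).toNNReal • (if (l, l + x) ∈ U then (1 : ℝ) else 0)) =
        fun x => (fun y : ℝ => (if (l, y) ∈ U then (1 : ℝ) else 0) * q (y - l)) (x + l) := by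
      funext x
      beta_reduce
      rw [NNReal.smul_def, Real.coe_toNNReal _ (hq_nonneg x)]
      rw [add_sub_cancel_right, add_comm l x, mul_comm, smul_eq_mul]
    rw [h]
    exact integral_add_right_eq_self
      (fun y : ℝ => (if (l, y) ∈ U then (1 : ℝ) else 0) * q (y - l)) l
  -- the key set-integral identity
  have key : ∀ s : Set Ω, MeasurableSet[F t] s →
      ∫ ω in s, (if (L ω, L ω + ε ω) ∈ U then (1 : ℝ) else 0) ∂P
        = ∫ ω in s, f (L ω) ∂P := by
    intro s hs
    have hs0 : MeasurableSet s := F.le t s hs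
    set V : Ω → ℝ × ℝ := fun ω => (s.indicator (fun _ => (1 : ℝ)) ω, L ω) with hV_def
    have hV_meas : Measurable V := (measurable_const.indicator hs0).prodMk hL
    have hV_G : Measurable[(⨆ u, F u) ⊔ MeasurableSpace.comap L inferInstance] V := by
      refine Measurable.prodMk ?_ ?_
      · refine measurable_const.indicator ?_
        exact ((le_iSup (fun u => (F u : MeasurableSpace Ω)) t).trans le_sup_left) _ hs
      · exact measurable_iff_comap_le.mpr le_sup_right
    have hindep : IndepFun V ε P := by
      rw [IndepFun_iff_Indep]
      exact indep_of_indep_of_le_left hε_indep.symm hV_G.comap_le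
    have hmap : P.map (fun ω => (V ω, ε ω)) = (P.map V).prod (P.map ε) :=
      (indepFun_iff_map_prod_eq_prod_map_map hV_meas.aemeasurable
        hε_meas.aemeasurable).mp hindep
    haveI : IsProbabilityMeasure (P.map V) := Measure.isProbabilityMeasure_map hV_meas.aemeasurable
    set H : (ℝ × ℝ) × ℝ → ℝ :=
      fun z => z.1.1 * (if (z.1.2, z.1.2 + z.2) ∈ U then (1 : ℝ) else 0) with hH_def
    have hUz : MeasurableSet {z : (ℝ × ℝ) × ℝ | (z.1.2, z.1.2 + z.2) ∈ U} :=
      hU.preimage ((measurable_fst.snd).prodMk (measurable_fst.snd.add measurable_snd))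
    have hH_meas : Measurable H :=
      (measurable_fst.fst).mul (Measurable.ite hUz measurable_const measurable_const)
    have hH_int : Integrable H ((P.map V).prod (P.map ε)) := by
      refine (integrable_const (1 : ℝ)).mono' hH_meas.aestronglyMeasurable ?_
      rw [ae_iff]
      have hbadV : (P.map V) {v : ℝ × ℝ | 1 < ‖v.1‖} = 0 := by
        rw [Measure.map_apply hV_meas
          (measurableSet_lt measurable_const measurable_fst.norm)]
        convert measure_empty (μ := P)
        ext ω
        simp only [Set.mem_preimage, Set.mem_setOf_eq, Set.mem_empty_iff_false, iff_false,
          not_lt, hV_def]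
        by_cases h : ω ∈ s <;> simp [Set.indicator_of_mem, Set.indicator_of_notMem, h]
      refine measure_mono_null ?_
        (by rw [Measure.prod_prod, hbadV, zero_mul] :
          ((P.map V).prod (P.map ε)) ({v : ℝ × ℝ | 1 < ‖v.1‖} ×ˢ (Set.univ : Set ℝ)) = 0)
      intro z hz
      simp only [Set.mem_setOf_eq, not_le] at hz
      refine ⟨?_, trivial⟩
      have hle : ‖H z‖ ≤ ‖z.1.1‖ := by
        rw [hH_def]
        simp only [norm_mul]
        by_cases h : (z.1.2, z.1.2 + z.2) ∈ U <;> simp [h]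
      simp only [Set.mem_setOf_eq]
      linarith
    -- now compute
    have e1 : s.indicator (fun ω => if (L ω, L ω + ε ω) ∈ U then (1 : ℝ) else 0)
        = fun ω => H (V ω, ε ω) := by
      funext ω
      by_cases h : ω ∈ s <;>
        simp [hH_def, hV_def, Set.indicator_of_mem, Set.indicator_of_notMem, h]
    have e2 : ∀ v : ℝ × ℝ, ∫ x, H (v, x) ∂(P.map ε) = v.1 * f v.2 := by
      intro v
      simp only [hH_def]
      rw [integral_const_mul, h_inner]
    have hφ_meas : Measurable fun v : ℝ × ℝ => v.1 * f v.2 :=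
      measurable_fst.mul (hf_meas.comp measurable_snd)
    calc ∫ ω in s, (if (L ω, L ω + ε ω) ∈ U then (1 : ℝ) else 0) ∂P
        = ∫ ω, s.indicator (fun ω => if (L ω, L ω + ε ω) ∈ U then (1 : ℝ) else 0) ω ∂P := by
          rw [integral_indicator hs0]
      _ = ∫ ω, H (V ω, ε ω) ∂P := by rw [e1]
      _ = ∫ z, H z ∂(P.map (fun ω => (V ω, ε ω))) := by
          rw [integral_map (hV_meas.prodMk hε_meas).aemeasurable
            hH_meas.aestronglyMeasurable]
      _ = ∫ z, H z ∂((P.map V).prod (P.map ε)) := by rw [hmap]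
      _ = ∫ v, ∫ x, H (v, x) ∂(P.map ε) ∂(P.map V) := integral_prod H hH_int
      _ = ∫ v, v.1 * f v.2 ∂(P.map V) := by simp only [e2]
      _ = ∫ ω, (V ω).1 * f (V ω).2 ∂P := by
          rw [integral_map hV_meas.aemeasurable hφ_meas.aestronglyMeasurable]
      _ = ∫ ω, s.indicator (fun ω => f (L ω)) ω ∂P := by
          congr 1
          funext ω
          by_cases h : ω ∈ s <;>
            simp [hV_def, Set.indicator_of_mem, Set.indicator_of_notMem, h]
      _ = ∫ ω in s, f (L ω) ∂P := integral_indicator hs0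
  -- integrability of the two integrands
  have hind_meas : Measurable fun ω => if (L ω, L ω + ε ω) ∈ U then (1 : ℝ) else 0 := by
    have h : MeasurableSet {ω | (L ω, L ω + ε ω) ∈ U} :=
      hU.preimage (hL.prodMk (hL.add hε_meas))
    exact Measurable.ite h measurable_const measurable_const
  have hind_int : Integrable (fun ω => if (L ω, L ω + ε ω) ∈ U then (1 : ℝ) else 0) P := by
    refine (integrable_const (1 : ℝ)).mono' hind_meas.aestronglyMeasurable ?_
    refine Filter.Eventually.of_forall fun ω => ?_
    by_cases h : (L ω, L ω + ε ω) ∈ U <;> simp [h]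
  have hfL_int : Integrable (fun ω => f (L ω)) P := by
    refine (integrable_const (1 : ℝ)).mono' (hf_meas.comp hL).aestronglyMeasurable ?_
    refine Filter.Eventually.of_forall fun ω => ?_
    rw [Real.norm_eq_abs]
    exact abs_le.2 ⟨by linarith [hf_nonneg (L ω)], hf_le_one (L ω)⟩
  -- identify the conditional expectations
  have h2 : (P[fun ω => f (L ω)|F t]) =ᵐ[P]
      (P[fun ω => if (L ω, L ω + ε ω) ∈ U then (1 : ℝ) else 0|F t]) := by
    refine ae_eq_condExp_of_forall_setIntegral_eq (F.le t) hind_int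
      (fun s hs _ => integrable_condExp.integrableOn) (fun s hs _ => ?_)
      (StronglyMeasurable.aestronglyMeasurable stronglyMeasurable_condExp)
    rw [setIntegral_condExp (F.le t) hfL_int hs]
    exact (key s hs).symm
  exact h2.symm.trans (hp_density t f hf_meas hf_bdd)
end
end
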